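/- If gcd(m+1, n+1) = 1, then the complete tripartite graph K_{1,m,n} has an interval (m+n)-coloring. -/

import Mathlib

/-- The set of colors on edges incident to `v` (the spectrum of `v`). -/
def Spectrum {V : Type*} (G : SimpleGraph V) (c : G.edgeSet → ℕ) (v : V) : Set ℕ :=
  {k | ∃ e : G.edgeSet, v ∈ (e : Sym2 V) ∧ c e = k}

/-- `c` is an interval `t`-coloring of `G`: a proper edge-coloring with colors
`1,…,t`, all colors used, and each vertex's spectrum an interval of integers. -/
def IsIntervalColoring {V : Type*} (G : SimpleGraph V) (t : ℕ) (c : G.edgeSet → ℕ) : Prop :=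
  (∀ e, 1 ≤ c e ∧ c e ≤ t) ∧
  (∀ k, 1 ≤ k → k ≤ t → ∃ e, c e = k) ∧
  (∀ e₁ e₂ : G.edgeSet, e₁ ≠ e₂ → (∃ v, v ∈ (e₁ : Sym2 V) ∧ v ∈ (e₂ : Sym2 V)) →
    c e₁ ≠ c e₂) ∧
  (∀ v : V, ∃ a b : ℕ, Spectrum G c v = Set.Icc a b)

/-- Which part of the tripartition a vertex belongs to. -/
def tripart (m n : ℕ) : Fin 1 ⊕ Fin m ⊕ Fin n → Fin 3
  | .inl _ => 0
  | .inr (.inl _) => 1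
  | .inr (.inr _) => 2

/-- The complete tripartite graph `K_{1,m,n}`. -/
def K1mn (m n : ℕ) : SimpleGraph (Fin 1 ⊕ Fin m ⊕ Fin n) where
  Adj a b := tripart m n a ≠ tripart m n b
  symm := ⟨fun _ _ h => h.symm⟩
  loopless := ⟨fun _ h => h rfl⟩

/-!
Colour the edge `a_i b_j` with `i + j + 1`: then `a_i` already sees `i + 1, …, i + n` and `b_j`
sees `j + 1, …, j + m`, so the edge from the centre to `a_i` must get `i` or `i + n + 1`, the one
to `b_j` must get `j` or `j + m + 1`, and the centre must see each of `1, …, m + n` once.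
Put `a_i` at `i` and `b_j` at `j + m + 1` in `ZMod (m + n + 2)`: in both cases the two admissible
colours are the endpoints `x`, `x + u` of a step by `u = n + 1`. As `u` is a unit, the orbit
`0, u, 2u, …` is one cycle through all residues. Let every `x` met before `-1` on this orbit take
`x + u` and every other `x` keep `x`: the chosen colours are then pairwise distinct and avoid
`0` and `-1`, hence are exactly `1, …, m + n`.
-/

open Function Set

lemma range_eq_Icc_of_injective {α : Type*} [Fintype α] {g : α → ℕ} {a b : ℕ}
    (hg : Injective g) (hmaps : ∀ x, g x ∈ Icc a b) (hcard : Fintype.card α = b + 1 - a) :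
    range g = Icc a b :=
  eq_of_subset_of_ncard_le (range_subset_iff.mpr hmaps) (by
    rw [ncard_Icc_nat, ncard_range_of_injective hg, Nat.card_eq_fintype_card, hcard])

lemma injOn_insert_range_and_image_eq_Icc {α : Type*} {φ : α → ℕ} {x : α} {k a : ℕ}
    {e : Fin k → α} (he : ∀ j, φ (e j) = a + j + 1) (hx : φ x = a ∨ φ x = a + k + 1) :
    (insert x (range e)).InjOn φ ∧ ∃ b c, φ '' insert x (range e) = Icc b c := by
  have hrange : φ '' range e = Icc (a + 1) (a + k) := by
    ext c
    simp only [← range_comp, comp_apply, he, mem_range, mem_Icc]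
    constructor
    · rintro ⟨j, rfl⟩
      omega
    · rintro ⟨h₁, h₂⟩
      exact ⟨⟨c - a - 1, by omega⟩, by simp only; omega⟩
  have hφx : φ x ∉ φ '' range e := by
    rw [hrange, mem_Icc]
    omega
  refine ⟨(injOn_insert fun hx' => hφx (mem_image_of_mem φ hx')).mpr ⟨?_, hφx⟩, ?_⟩
  · exact Injective.injOn_range fun j j' h => Fin.ext (by simpa [he] using h)
  · rw [image_insert_eq, hrange]
    rcases hx with h | h
    · exact ⟨a, a + k, by ext; simp only [mem_insert_iff, mem_Icc, h]; omega⟩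
    · exact ⟨a + 1, a + k + 1, by ext; simp only [mem_insert_iff, mem_Icc, h]; omega⟩

lemma natCast_ne_neg_one_of_lt {N k : ℕ} (h : k + 1 < N) : (k : ZMod N) ≠ -1 := by
  rw [Ne, eq_neg_iff_add_eq_zero, ← Nat.cast_add_one, ZMod.natCast_eq_zero_iff]
  exact Nat.not_dvd_of_pos_of_lt k.succ_pos h

lemma val_mem_Icc_of_ne_zero_of_ne_neg_one {N : ℕ} [NeZero N] {y : ZMod N} (h₀ : y ≠ 0)
    (h₁ : y ≠ -1) : y.val ∈ Icc 1 (N - 2) := by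
  obtain ⟨k, rfl⟩ : ∃ k, N = k + 1 := Nat.exists_eq_succ_of_ne_zero (NeZero.ne N)
  have hval₀ : y.val ≠ 0 := (ZMod.val_eq_zero y).not.mpr h₀
  have hval₁ : y.val ≠ k :=
    fun h => h₁ (ZMod.val_injective _ (h.trans (ZMod.val_neg_one k).symm))
  have := ZMod.val_lt y
  rw [mem_Icc]
  omega

section UnitCycle

variable {N : ℕ} (u : (ZMod N)ˣ)

-- the `t < N` with `x = t • u`
def cycleIndex (x : ZMod N) : ℕ := (x * ↑u⁻¹).val

lemma cycleIndex_injective [NeZero N] : Injective (cycleIndex u) := fun x y h => by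
  simpa using ZMod.val_injective N h

lemma cycleIndex_zero : cycleIndex u 0 = 0 := by simp [cycleIndex]

lemma cycleIndex_lt [NeZero N] (x : ZMod N) : cycleIndex u x < N := ZMod.val_lt _

lemma cycleIndex_neg_unit [NeZero N] : cycleIndex u (-u) = N - 1 := by
  obtain ⟨k, rfl⟩ : ∃ k, N = k + 1 := Nat.exists_eq_succ_of_ne_zero (NeZero.ne N)
  simp [cycleIndex, ZMod.val_neg_one]

lemma cycleIndex_add_unit {x : ZMod N} (h : cycleIndex u x + 1 < N) :
    cycleIndex u (x + u) = cycleIndex u x + 1 := by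
  have h1 : (1 : ZMod N).val = 1 := by rw [ZMod.val_one_eq_one_mod, Nat.mod_eq_of_lt (by omega)]
  unfold cycleIndex at h ⊢
  rw [add_mul, Units.mul_inv, ZMod.val_add_of_lt (by rwa [h1]), h1]

def cycleChoice (x : ZMod N) : ZMod N :=
  if cycleIndex u x < cycleIndex u (-1) then x + u else x

lemma cycleChoice_eq_or (x : ZMod N) : cycleChoice u x = x ∨ cycleChoice u x = x + u := by
  unfold cycleChoice; split_ifs <;> simp

lemma cycleChoice_injOn [NeZero N] : InjOn (cycleChoice u) {x | x ≠ -1} := by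
  have hnext : ∀ x : ZMod N, x + u ≠ -1 → cycleIndex u x < cycleIndex u (-1) →
      cycleIndex u (x + u) < cycleIndex u (-1) := by
    intro x hxu hx
    have := cycleIndex_lt u (-1)
    have := (cycleIndex_injective u).ne hxu
    rw [cycleIndex_add_unit u (by omega)] at this ⊢
    omega
  intro x hx y hy hxy
  unfold cycleChoice at hxy
  split_ifs at hxy with h₁ h₂ h₂
  · exact add_right_cancel hxy
  · exact absurd (hxy ▸ hnext x (hxy ▸ hy) h₁) h₂
  · exact absurd (hxy ▸ hnext y (hxy ▸ hx) h₂) h₁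
  · exact hxy

lemma cycleChoice_ne_zero [NeZero N] {x : ZMod N} (hx : x ≠ -1) : cycleChoice u x ≠ 0 := by
  unfold cycleChoice
  split_ifs with h
  · intro h0
    rw [add_eq_zero_iff_eq_neg] at h0
    subst h0
    rw [cycleIndex_neg_unit] at h
    have := cycleIndex_lt u (-1)
    omega
  · rintro rfl
    rw [cycleIndex_zero, not_lt, Nat.le_zero, ← cycleIndex_zero u] at h
    exact hx (cycleIndex_injective u h).symm

lemma cycleChoice_ne_neg_one {x : ZMod N} (hx : x ≠ -1) (hxu : x + u ≠ -1) :
    cycleChoice u x ≠ -1 := by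
  rcases cycleChoice_eq_or u x with h | h <;> rwa [h]

end UnitCycle

section SymmetricColouring

variable {V : Type*} {G : SimpleGraph V} {f : V → V → ℕ} (hf : ∀ v w, f v w = f w v)

lemma spectrum_lift (v : V) :
    Spectrum G (fun e => Sym2.lift ⟨f, hf⟩ e) v = f v '' G.neighborSet v := by
  ext k
  constructor
  · rintro ⟨⟨e, he⟩, hv, rfl⟩
    obtain ⟨w, rfl⟩ := Sym2.mem_iff_exists.mp hv
    exact ⟨w, he, rfl⟩
  · rintro ⟨w, hw, rfl⟩
    exact ⟨⟨s(v, w), hw⟩, Sym2.mem_mk_left _ _, rfl⟩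

theorem isIntervalColoring_lift {t : ℕ}
    (hbound : ∀ v w, G.Adj v w → f v w ∈ Icc 1 t)
    (hused : ∀ k ∈ Icc 1 t, ∃ v w, G.Adj v w ∧ f v w = k)
    (hlocal : ∀ v, (G.neighborSet v).InjOn (f v) ∧ ∃ a b, f v '' G.neighborSet v = Icc a b) :
    IsIntervalColoring G t (fun e => Sym2.lift ⟨f, hf⟩ e) := by
  refine ⟨?_, ?_, ?_, fun v => by simpa only [spectrum_lift] using (hlocal v).2⟩
  · rintro ⟨e, he⟩
    induction e using Sym2.ind with
    | _ v w => exact hbound v w he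
  · intro k hk₁ hk₂
    obtain ⟨v, w, hvw, rfl⟩ := hused k ⟨hk₁, hk₂⟩
    exact ⟨⟨s(v, w), hvw⟩, rfl⟩
  · rintro ⟨e₁, he₁⟩ ⟨e₂, he₂⟩ hne ⟨v, hv₁, hv₂⟩
    obtain ⟨w₁, rfl⟩ := Sym2.mem_iff_exists.mp hv₁
    obtain ⟨w₂, rfl⟩ := Sym2.mem_iff_exists.mp hv₂
    intro h
    have : w₁ = w₂ := (hlocal v).1 he₁ he₂ h
    exact hne (by subst this; rfl)

end SymmetricColouring

section K1mn

variable {m n : ℕ}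

lemma K1mn_neighborSet_inl (a : Fin 1) : (K1mn m n).neighborSet (.inl a) = range .inr := by
  ext (b | i | j) <;> simp [K1mn, tripart]

lemma K1mn_neighborSet_inr_inl (i : Fin m) :
    (K1mn m n).neighborSet (.inr (.inl i)) = insert (.inl 0) (range (.inr ∘ .inr)) := by
  ext (b | i' | j) <;> simp [K1mn, tripart, Fin.fin_one_eq_zero]

lemma K1mn_neighborSet_inr_inr (j : Fin n) :
    (K1mn m n).neighborSet (.inr (.inr j)) = insert (.inl 0) (range (.inr ∘ .inl)) := by
  ext (b | i | j') <;> simp [K1mn, tripart, Fin.fin_one_eq_zero]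

variable (m n) in
def k1mnColour (hub : Fin m ⊕ Fin n → ℕ) :
    Fin 1 ⊕ Fin m ⊕ Fin n → Fin 1 ⊕ Fin m ⊕ Fin n → ℕ
  | .inl _, .inr p => hub p
  | .inr p, .inl _ => hub p
  | .inr (.inl i), .inr (.inr j) => i + j + 1
  | .inr (.inr j), .inr (.inl i) => i + j + 1
  | _, _ => 0

lemma k1mnColour_comm (hub : Fin m ⊕ Fin n → ℕ) (v w : Fin 1 ⊕ Fin m ⊕ Fin n) :
    k1mnColour m n hub v w = k1mnColour m n hub w v := by
  rcases v with _ | _ | _ <;> rcases w with _ | _ | _ <;> rfl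

theorem isIntervalColoring_k1mnColour {hub : Fin m ⊕ Fin n → ℕ}
    (hA : ∀ i : Fin m, hub (.inl i) = i ∨ hub (.inl i) = i + n + 1)
    (hB : ∀ j : Fin n, hub (.inr j) = j ∨ hub (.inr j) = j + m + 1)
    (hinj : Injective hub) (hrange : range hub = Icc 1 (m + n)) :
    IsIntervalColoring (K1mn m n) (m + n)
      (fun e => Sym2.lift ⟨k1mnColour m n hub, k1mnColour_comm hub⟩ e) := by
  have hhub : ∀ p, hub p ∈ Icc 1 (m + n) := fun p => hrange ▸ mem_range_self p
  refine isIntervalColoring_lift _ ?_ ?_ ?_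
  · rintro (a | i | j) (b | i' | j') hadj <;>
      simp only [K1mn, tripart, ne_eq, not_true_eq_false] at hadj
    all_goals first
      | exact hhub _
      | simp only [k1mnColour, mem_Icc]; omega
  · intro k hk
    rw [← hrange] at hk
    obtain ⟨p, rfl⟩ := hk
    exact ⟨.inl 0, .inr p, by rcases p with _ | _ <;> simp [K1mn, tripart], rfl⟩
  · rintro (a | i | j)
    · rw [K1mn_neighborSet_inl]
      refine ⟨Injective.injOn_range (f := Sum.inr) hinj, 1, m + n, ?_⟩
      rw [← range_comp]
      exact hrange
    · rw [K1mn_neighborSet_inr_inl]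
      exact injOn_insert_range_and_image_eq_Icc (fun j => rfl) (hA i)
    · rw [K1mn_neighborSet_inr_inr]
      exact injOn_insert_range_and_image_eq_Icc
        (fun i => show (i : ℕ) + j + 1 = j + i + 1 by omega) (hB j)

end K1mn

theorem exists_k1mn_hub (m n : ℕ) (hg : Nat.Coprime (m + 1) (n + 1)) :
    ∃ hub : Fin m ⊕ Fin n → ℕ,
      (∀ i : Fin m, hub (.inl i) = i ∨ hub (.inl i) = i + n + 1) ∧
      (∀ j : Fin n, hub (.inr j) = j ∨ hub (.inr j) = j + m + 1) ∧
      Injective hub ∧ ∀ p, hub p ∈ Icc 1 (m + n) := by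
  have hcop : Nat.Coprime (n + 1) (m + n + 2) := by
    rw [show m + n + 2 = (m + 1) + (n + 1) by ring, Nat.coprime_add_self_right]
    exact hg.symm
  let u := ZMod.unitOfCoprime (n + 1) hcop
  let tail : Fin m ⊕ Fin n → ℕ := Sum.elim (fun i => i) (fun j => j + m + 1)
  let head : Fin m ⊕ Fin n → ℕ := Sum.elim (fun i => i + n + 1) (fun j => j)
  have hedge : ∀ p, tail p + 1 < m + n + 2 ∧ head p + 1 < m + n + 2 ∧
      (tail p : ZMod (m + n + 2)) + u = head p := by
    have hN : ((m + n + 2 : ℕ) : ZMod (m + n + 2)) = 0 := ZMod.natCast_self _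
    rintro (i | j) <;> refine ⟨by simp only [tail, Sum.elim_inl, Sum.elim_inr]; omega,
      by simp only [head, Sum.elim_inl, Sum.elim_inr]; omega, ?_⟩
    · simp only [tail, head, u, ZMod.coe_unitOfCoprime, Sum.elim_inl]
      push_cast; ring
    · simp only [tail, head, u, ZMod.coe_unitOfCoprime, Sum.elim_inr]
      push_cast at hN ⊢; linear_combination hN
  have htail : ∀ p, (tail p : ZMod (m + n + 2)) ≠ -1 :=
    fun p => natCast_ne_neg_one_of_lt (hedge p).1
  have hchoice : ∀ p, (cycleChoice u (tail p)).val = tail p ∨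
      (cycleChoice u (tail p)).val = head p := by
    intro p
    obtain ⟨ht, hh, he⟩ := hedge p
    rcases cycleChoice_eq_or u (tail p) with h | h <;> rw [h]
    · exact .inl (ZMod.val_natCast_of_lt (by omega))
    · exact .inr (he ▸ ZMod.val_natCast_of_lt (by omega))
  refine ⟨fun p => (cycleChoice u (tail p)).val, fun i => hchoice (.inl i),
    fun j => (hchoice (.inr j)).symm, ?_, ?_⟩
  · intro p q hpq
    have h := congrArg ZMod.val
      (cycleChoice_injOn u (htail p) (htail q) (ZMod.val_injective _ hpq))
    rw [ZMod.val_natCast_of_lt (by have := (hedge p).1; omega),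
      ZMod.val_natCast_of_lt (by have := (hedge q).1; omega)] at h
    rcases p with i | j <;> rcases q with i' | j' <;>
      simp only [tail, Sum.elim_inl, Sum.elim_inr, Sum.inl.injEq, Sum.inr.injEq,
        reduceCtorEq] at h ⊢ <;> omega
  · intro p
    obtain ⟨-, hh, he⟩ := hedge p
    have hhead := natCast_ne_neg_one_of_lt hh
    rw [← he] at hhead
    simpa using val_mem_Icc_of_ne_zero_of_ne_neg_one (cycleChoice_ne_zero u (htail p))
      (cycleChoice_ne_neg_one u (htail p) hhead)

theorem stmt_4 (m n : ℕ)
    (hg : Nat.gcd (m + 1) (n + 1) = 1) :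
    ∃ c : (K1mn m n).edgeSet → ℕ, IsIntervalColoring (K1mn m n) (m + n) c := by
  obtain ⟨hub, hA, hB, hinj, hmaps⟩ := exists_k1mn_hub m n hg
  exact ⟨_, isIntervalColoring_k1mnColour hA hB hinj
    (range_eq_Icc_of_injective hinj hmaps (by simp))⟩
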